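/- arXiv:1210.2964 — 4 statements merged into one kernel-verified Lean document; each statement's English description precedes it below -/
import Mathlib

section
/- With notation as in the block upper-triangular lemma: if b commutes with z (bz = zb) and both [[z,u],[0,w]] and [[z,bu],[0,w]] lie in the domain of the intertwiner-preserving function f, then Δf(z,w)(bu) = b·Δf(z,w)(u), where Δf(z,w)(u) denotes the (1,2) entry of f([[z,u],[0,w]]). In particular Δf(z,w)(tu) = t·Δf(z,w)(u) for scalars t. -/
variable {H : Type*} [NormedAddCommGroup H] [NormedSpace ℂ H]

/-- The 2×2 block upper-triangular operator `[[z,u],[0,w]]` acting on `H ⊕ H`. -/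
noncomputable def blk (z u w : H →L[ℂ] H) : (H × H) →L[ℂ] (H × H) :=
  ((z.comp (ContinuousLinearMap.fst ℂ H H)) +
      u.comp (ContinuousLinearMap.snd ℂ H H)).prod
    (w.comp (ContinuousLinearMap.snd ℂ H H))

/-- Lemma 5.3(2) of the paper in the operator model: if `b` commutes with `z`, and `F`
preserves the intertwiners `diag(b, I)`, then the Taylor difference operator
`Δf(z,w)(u)` (the (1,2)-entry of `F([[z,u],[0,w]])`) satisfies `Δf(z,w)(bu) = b·Δf(z,w)(u)`;
in particular `Δf(z,w)(tu) = t·Δf(z,w)(u)` for scalars `t`. -/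
theorem stmt5 (f : (H →L[ℂ] H) → (H →L[ℂ] H))
    (F : ((H × H) →L[ℂ] (H × H)) → ((H × H) →L[ℂ] (H × H)))
    (Δ : (H →L[ℂ] H) → (H →L[ℂ] H) → (H →L[ℂ] H) → (H →L[ℂ] H))
    (z u w b : H →L[ℂ] H)
    (hF : ∀ z' u' w', F (blk z' u' w') = blk (f z') (Δ z' u' w') (f w'))
    (hintw : ∀ b' : H →L[ℂ] H, b' * z = z * b' →
      ∀ X Y : (H × H) →L[ℂ] (H × H),
        (blk b' 0 1).comp X = Y.comp (blk b' 0 1) →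
        (blk b' 0 1).comp (F X) = (F Y).comp (blk b' 0 1))
    (hb : b * z = z * b) :
    Δ z (b * u) w = b * Δ z u w ∧ ∀ t : ℂ, Δ z (t • u) w = t • Δ z u w := by
  have key : ∀ b' : H →L[ℂ] H, b' * z = z * b' → Δ z (b' * u) w = b' * Δ z u w := by
    intro b' hb'
    have hcomm : (blk b' 0 1).comp (blk z u w) = (blk z (b' * u) w).comp (blk b' 0 1) := by
      ext x <;> simp [blk, ContinuousLinearMap.mul_apply] <;>
        exact congrFun (congrArg DFunLike.coe hb') x
    have h := hintw b' hb' (blk z u w) (blk z (b' * u) w) hcomm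
    rw [hF, hF] at h
    ext x
    have h2 := congrArg (fun T : (H × H) →L[ℂ] (H × H) => (T (0, x)).1) h
    simpa [blk, ContinuousLinearMap.mul_apply] using h2.symm
  refine ⟨key b hb, fun t => ?_⟩
  have := key (t • 1) (by simp [smul_mul_assoc, mul_smul_comm])
  simpa [smul_mul_assoc] using this
end

section
/- With notation as in the block upper-triangular lemma: if [[z, bu],[0, z+bu]] lies in the domain, b commutes with z, and f preserves intertwiners, then f(z+bu) − f(z) = Δf(z, z+bu)(bu). In particular f(z+tu) − f(z) = t·Δf(z, z+tu)(u) for scalars t. -/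
variable {H : Type*} [NormedAddCommGroup H] [NormedSpace ℂ H]

/-- Lemma 5.3(4) of the paper in the operator model: if `b` commutes with `z` and the pair
`(f, F)` preserves intertwiners (row intertwiners such as `[−I, I]`, and square ones), then
`f(z+bu) − f(z) = Δf(z, z+bu)(bu)`, and `f(z+tu) − f(z) = t·Δf(z, z+tu)(u)` for scalars. -/
theorem stmt6 (f : (H →L[ℂ] H) → (H →L[ℂ] H))
    (F : ((H × H) →L[ℂ] (H × H)) → ((H × H) →L[ℂ] (H × H)))
    (Δ : (H →L[ℂ] H) → (H →L[ℂ] H) → (H →L[ℂ] H) → (H →L[ℂ] H))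
    (z u w b : H →L[ℂ] H)
    (hF : ∀ z' u' w', F (blk z' u' w') = blk (f z') (Δ z' u' w') (f w'))
    (hrow : ∀ (C : (H × H) →L[ℂ] H) (a : H →L[ℂ] H) (X : (H × H) →L[ℂ] (H × H)),
      C.comp X = a.comp C → C.comp (F X) = (f a).comp C)
    (hsq : ∀ (C X Y : (H × H) →L[ℂ] (H × H)),
      C.comp X = Y.comp C → C.comp (F X) = (F Y).comp C)
    (hb : b * z = z * b) :
    f (z + b * u) - f z = Δ z (b * u) (z + b * u) ∧
    ∀ t : ℂ, f (z + t • u) - f z = t • Δ z u (z + t • u) := by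
  have key : ∀ u' : H →L[ℂ] H, f (z + u') - f z = Δ z u' (z + u') := by
    intro u'
    set C : (H × H) →L[ℂ] H :=
      ContinuousLinearMap.snd ℂ H H - ContinuousLinearMap.fst ℂ H H with hCdef
    have hC : C.comp (blk z u' (z + u')) = z.comp C := by
      refine ContinuousLinearMap.ext fun v => ?_
      obtain ⟨x, y⟩ := v
      simp only [hCdef, blk, ContinuousLinearMap.comp_apply, ContinuousLinearMap.sub_apply,
        ContinuousLinearMap.add_apply, ContinuousLinearMap.prod_apply,
        ContinuousLinearMap.coe_fst', ContinuousLinearMap.coe_snd', map_sub]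
      abel
    have h2 := hrow C z _ hC
    rw [hF] at h2
    ext y
    have h3 := congrArg (fun T : (H × H) →L[ℂ] H => T (0, y)) h2
    simp only [hCdef, blk, ContinuousLinearMap.comp_apply, ContinuousLinearMap.sub_apply,
      ContinuousLinearMap.add_apply, ContinuousLinearMap.prod_apply,
      ContinuousLinearMap.coe_fst', ContinuousLinearMap.coe_snd', map_zero, zero_add,
      add_zero, sub_zero] at h3
    simp only [ContinuousLinearMap.sub_apply]
    rw [sub_eq_iff_eq_add]
    rw [sub_eq_iff_eq_add] at h3
    simpa [add_comm] using h3
  have hscale : ∀ (t : ℂ) (u' w' : H →L[ℂ] H), Δ z (t • u') w' = t • Δ z u' w' := by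
    intro t u' w'
    set D : (H × H) →L[ℂ] (H × H) :=
      (t • ContinuousLinearMap.fst ℂ H H).prod (ContinuousLinearMap.snd ℂ H H) with hDdef
    have hD : D.comp (blk z u' w') = (blk z (t • u') w').comp D := by
      refine ContinuousLinearMap.ext fun v => ?_
      obtain ⟨x, y⟩ := v
      simp only [hDdef, blk, ContinuousLinearMap.comp_apply, ContinuousLinearMap.prod_apply,
        ContinuousLinearMap.add_apply, ContinuousLinearMap.smul_apply,
        ContinuousLinearMap.coe_fst', ContinuousLinearMap.coe_snd', map_smul, smul_add,
        Prod.mk.injEq]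
    have h2 := hsq D _ _ hD
    rw [hF, hF] at h2
    ext y
    have h3 := congrArg (fun T : (H × H) →L[ℂ] (H × H) => (T (0, y)).1) h2
    simp only [hDdef, blk, ContinuousLinearMap.comp_apply, ContinuousLinearMap.prod_apply,
      ContinuousLinearMap.add_apply, ContinuousLinearMap.smul_apply,
      ContinuousLinearMap.coe_fst', ContinuousLinearMap.coe_snd', map_zero, zero_add,
      smul_zero, add_zero] at h3
    simpa using h3.symm
  refine ⟨key (b * u), fun t => ?_⟩
  rw [key (t • u), hscale]
end

section
/- Additivity of the difference operator: let f be an intertwiner-preserving function on block matrices over B(H). Suppose A := [[z, u₁+u₂],[0,w]], B := [[z,0,u₁],[0,z,u₂],[0,0,w]], and C := [[z,0,u₂],[0,z,u₁],[0,0,w]] all lie in the domain. Then, using that C = S·B·S for the 3×3 permutation matrix S of the transposition (1,2), and that D·B = A·D for D := [[I,I,0],[0,0,I]], one concludes Δf(z,w)(u₁+u₂) = Δf(z,w)(u₁) + Δf(z,w)(u₂). -/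
/-!
For scalars `a b`, the block-scalar matrix `!![a, b, 0; 0, 0, 1]` intertwines
`B = [[z, 0, u₁], [0, z, u₂], [0, 0, w]]` with `[[z, a • u₁ + b • u₂], [0, w]]`. Comparing the
`(1,3)` entries of `f` applied to both sides gives
`Δf(z,w)(a • u₁ + b • u₂) = a • f(B)₁₃ + b • f(B)₂₃`, so `Δf(z,w)` is even `ℂ`-linear;
additivity is the case `(a, b) ∈ {(1,1), (1,0), (0,1)}`.
-/

variable {A : Type*} [NormedRing A] [NormedAlgebra ℂ A]

noncomputable def blkScalar {m n : ℕ} (A : Type*) [NormedRing A] [NormedAlgebra ℂ A]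
    (s : Matrix (Fin m) (Fin n) ℂ) : Matrix (Fin m) (Fin n) A :=
  s.map (algebraMap ℂ A)

def PreservesIntertwiners (f : ∀ n : ℕ, Matrix (Fin n) (Fin n) A → Matrix (Fin n) (Fin n) A) :
    Prop :=
  ∀ (m n : ℕ) (s : Matrix (Fin m) (Fin n) ℂ) (X : Matrix (Fin n) (Fin n) A)
    (Y : Matrix (Fin m) (Fin m) A),
    blkScalar A s * X = Y * blkScalar A s → blkScalar A s * f n X = f m Y * blkScalar A s

theorem blkScalar_mul_eq_mul_blkScalar (z w u₁ u₂ : A) (a b : ℂ) :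
    blkScalar A !![a, b, 0; 0, 0, 1] * !![z, 0, u₁; 0, z, u₂; 0, 0, w] =
      !![z, a • u₁ + b • u₂; 0, w] * blkScalar A !![a, b, 0; 0, 0, 1] := by
  ext i j
  fin_cases i <;> fin_cases j <;>
    simp [blkScalar, Matrix.mul_apply, Fin.sum_univ_succ, Algebra.smul_def, Algebra.commutes]

theorem PreservesIntertwiners.corner_smul_add_smul
    {f : ∀ n : ℕ, Matrix (Fin n) (Fin n) A → Matrix (Fin n) (Fin n) A}
    (hf : PreservesIntertwiners f) (z w u₁ u₂ : A) (a b : ℂ) :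
    (f 2 !![z, a • u₁ + b • u₂; 0, w]) 0 1 =
      a • (f 3 !![z, 0, u₁; 0, z, u₂; 0, 0, w]) 0 2 +
        b • (f 3 !![z, 0, u₁; 0, z, u₂; 0, 0, w]) 1 2 := by
  have h := congrFun₂ (hf 2 3 _ _ _ (blkScalar_mul_eq_mul_blkScalar z w u₁ u₂ a b)) 0 2
  simpa [blkScalar, Matrix.mul_apply, Fin.sum_univ_succ, Algebra.smul_def] using h.symm

/-- Additivity of the Taylor difference operator (Lemma 5.7 of the paper, argument of
Kaliuzhnyi-Verbovetskyi–Vinnikov): if the family `f` preserves all block-scalar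
intertwiners, then the (1,2)-corner of `f₂([[z,u],[0,w]])` is additive in `u`. -/
theorem stmt7
    (f : ∀ n : ℕ, Matrix (Fin n) (Fin n) A → Matrix (Fin n) (Fin n) A)
    (hf : ∀ (m n : ℕ) (s : Matrix (Fin m) (Fin n) ℂ)
        (X : Matrix (Fin n) (Fin n) A) (Y : Matrix (Fin m) (Fin m) A),
      blkScalar A s * X = Y * blkScalar A s →
      blkScalar A s * f n X = f m Y * blkScalar A s)
    (z w u₁ u₂ : A) :
    (f 2 !![z, u₁ + u₂; 0, w]) 0 1 =
      (f 2 !![z, u₁; 0, w]) 0 1 + (f 2 !![z, u₂; 0, w]) 0 1 := by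
  have hsum := PreservesIntertwiners.corner_smul_add_smul hf z w u₁ u₂ 1 1
  have hfst := PreservesIntertwiners.corner_smul_add_smul hf z w u₁ u₂ 1 0
  have hsnd := PreservesIntertwiners.corner_smul_add_smul hf z w u₁ u₂ 0 1
  simp only [one_smul, zero_smul, add_zero, zero_add] at hsum hfst hsnd
  rw [hsum, hfst, hsnd]
end

section
/- Taylor's theorem with remainder for matricial functions (Banach algebra model): let f be an intertwiner-preserving function on block matrices over B(H), and suppose the (n+1)×(n+1) block matrix A with diagonal (z, z, …, z, z+w) and superdiagonal (w, …, w) lies in the domain. Then f(z+w) = ∑_{k=0}^{n-1} Δ^k f(z)(w,…,w) + Δⁿ f(z,…,z, z+w)(w,…,w), where Δ^k f(z₀,…,z_k)(u₁,…,u_k) is defined as the (0,k)-corner of f applied to the bidiagonal block matrix with diagonal z₀,…,z_k and superdiagonal u₁,…,u_k. -/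
/-!
Let `B` be the bidiagonal matrix with diagonal `(z, …, z, z + w)` and superdiagonal `w`. Every
row of `B` sums to `z + w`, so the column `(1, …, 1)ᵀ` intertwines `z + w` with `B`, and hence
`f(z + w)` is the sum of the first row of `f(B)`. The span of the first `k + 1` coordinates is
`B`-invariant, so the coordinate inclusion intertwines the leading `(k + 1) × (k + 1)` block of
`B` with `B`; thus the `(0, k)` entry of `f(B)` is `Δᵏf(z, …, z)(w, …, w)` for `k < n`, and the
last entry is the remainder term.
-/

variable {A : Type*} [NormedRing A] [NormedAlgebra ℂ A]

/-- The `(k+1)×(k+1)` bidiagonal block matrix with diagonal `d` and superdiagonal `u`. -/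
def bidiag (k : ℕ) (d : Fin (k + 1) → A) (u : Fin k → A) :
    Matrix (Fin (k + 1)) (Fin (k + 1)) A :=
  Matrix.of fun i j =>
    if (j : ℕ) = (i : ℕ) then d i
    else if h : (j : ℕ) = (i : ℕ) + 1 then u ⟨i, by have := j.isLt; omega⟩ else 0

/-- The `k`-th order Taylor difference operator `Δᵏf(z₀,…,z_k)(u₁,…,u_k)`: the `(0,k)`-corner
of `f` applied to the bidiagonal matrix with diagonal `z₀,…,z_k` and superdiagonal
`u₁,…,u_k`. -/
def TaylorDelta (f : ∀ n : ℕ, Matrix (Fin n) (Fin n) A → Matrix (Fin n) (Fin n) A)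
    (k : ℕ) (d : Fin (k + 1) → A) (u : Fin k → A) : A :=
  f (k + 1) (bidiag k d u) 0 (Fin.last k)

section bidiag

variable {R : Type*} [NormedRing R] {k : ℕ} (d : Fin (k + 1) → R) (u : Fin k → R)

theorem bidiag_apply_of_lt {i j : Fin (k + 1)} (h : j < i) : bidiag k d u i j = 0 := by
  have h1 : (j : ℕ) ≠ i := by omega
  have h2 : (j : ℕ) ≠ i + 1 := by omega
  simp [bidiag, h1, h2]

theorem bidiag_row (i : Fin (k + 1)) :
    bidiag k d u i = Pi.single i (d i) +
      if h : (i : ℕ) < k then Pi.single ⟨i + 1, by omega⟩ (u ⟨i, h⟩) else 0 := by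
  ext j
  by_cases hi : (i : ℕ) < k <;>
    simp only [hi, bidiag, Matrix.of_apply, Pi.add_apply, Pi.single_apply, Fin.ext_iff, dite_true,
      dite_false, Pi.zero_apply, add_zero] <;>
    split_ifs <;> first | omega | simp_all

theorem sum_bidiag_row (i : Fin (k + 1)) :
    ∑ j, bidiag k d u i j = d i + if h : (i : ℕ) < k then u ⟨i, h⟩ else 0 := by
  rw [bidiag_row]
  split_ifs <;> simp [Finset.sum_add_distrib]

theorem bidiag_submatrix_castLE {j : ℕ} (h : j + 1 ≤ k + 1) :
    (bidiag k d u).submatrix (Fin.castLE h) (Fin.castLE h) =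
      bidiag j (d ∘ Fin.castLE h) (u ∘ Fin.castLE (by omega)) := by
  ext a b
  simp [bidiag, Fin.castLE]

end bidiag

section submatrixOne

variable {R ι κ ν : Type*} [NonAssocSemiring R] [DecidableEq ι] {e : κ → ι}

theorem one_submatrix_id_mul_apply_apply [Fintype κ] (he : Function.Injective e)
    (M : Matrix κ ν R) (i : κ) (b : ν) :
    ((1 : Matrix ι ι R).submatrix id e * M) (e i) b = M i b := by
  classical
  simp [Matrix.mul_apply, Matrix.one_apply, he.eq_iff]

theorem one_submatrix_id_mul_apply_of_notMem_range [Fintype κ] (M : Matrix κ ν R) {a : ι}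
    (ha : a ∉ Set.range e) (b : ν) : ((1 : Matrix ι ι R).submatrix id e * M) a b = 0 := by
  refine (Matrix.mul_apply ..).trans (Finset.sum_eq_zero fun c _ => ?_)
  have : a ≠ e c := fun hac => ha ⟨c, hac.symm⟩
  simp [this]

theorem mul_one_submatrix_id_apply [Fintype ι] (M : Matrix ν ι R) (a : ν) (b : κ) :
    (M * (1 : Matrix ι ι R).submatrix id e) a b = M a (e b) := by
  simp [Matrix.mul_apply, Matrix.one_apply]

end submatrixOne

theorem blkScalar_one_submatrix {l m n : ℕ} (e₁ : Fin l → Fin n) (e₂ : Fin m → Fin n) :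
    blkScalar A ((1 : Matrix (Fin n) (Fin n) ℂ).submatrix e₁ e₂) =
      (1 : Matrix (Fin n) (Fin n) A).submatrix e₁ e₂ := by
  simp [blkScalar, ← Matrix.submatrix_map, Matrix.map_one]

namespace PreservesIntertwiners

variable {f : ∀ n : ℕ, Matrix (Fin n) (Fin n) A → Matrix (Fin n) (Fin n) A}

theorem apply_castLE_castLE (hf : PreservesIntertwiners f) {k m : ℕ} (h : k ≤ m)
    (X : Matrix (Fin m) (Fin m) A) (hX : ∀ a b : Fin m, (b : ℕ) < k → k ≤ (a : ℕ) → X a b = 0) (i j : Fin k) :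
    f m X (Fin.castLE h i) (Fin.castLE h j) =
      f k (X.submatrix (Fin.castLE h) (Fin.castLE h)) i j := by
  set s := (1 : Matrix (Fin m) (Fin m) ℂ).submatrix id (Fin.castLE h)
  have hs : blkScalar A s * X.submatrix (Fin.castLE h) (Fin.castLE h) = X * blkScalar A s := by
    ext a b
    rw [blkScalar_one_submatrix, mul_one_submatrix_id_apply]
    by_cases ha : (a : ℕ) < k
    · obtain ⟨a, rfl⟩ : ∃ a' : Fin k, Fin.castLE h a' = a := ⟨⟨a, ha⟩, rfl⟩
      rw [one_submatrix_id_mul_apply_apply (Fin.castLE_injective h), Matrix.submatrix_apply]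
    · have hrange : a ∉ Set.range (Fin.castLE h) := by
        rintro ⟨c, rfl⟩
        exact ha c.isLt
      rw [one_submatrix_id_mul_apply_of_notMem_range _ hrange,
        hX a (Fin.castLE h b) b.isLt (not_lt.mp ha)]
  have key := congrFun (congrFun (hf m k s _ X hs) (Fin.castLE h i)) j
  rwa [blkScalar_one_submatrix, one_submatrix_id_mul_apply_apply (Fin.castLE_injective h),
    mul_one_submatrix_id_apply, eq_comm] at key

theorem apply_one_eq_sum_row (hf : PreservesIntertwiners f) {m : ℕ}
    (Y : Matrix (Fin m) (Fin m) A) (x : A) (hY : ∀ a, ∑ b, Y a b = x) (a : Fin m) :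
    f 1 !![x] 0 0 = ∑ b, f m Y a b := by
  set s : Matrix (Fin m) (Fin 1) ℂ := Matrix.of fun _ _ => 1
  have hs : blkScalar A s = Matrix.of fun _ _ => 1 := by ext; simp [blkScalar, s]
  have key := hf m 1 s !![x] Y (by ext a b; simp [hs, Matrix.mul_apply, hY])
  simpa [hs, Matrix.mul_apply] using congrFun (congrFun key a) 0

theorem apply_bidiag_castLE_last (hf : PreservesIntertwiners f) {n j : ℕ} (h : j + 1 ≤ n + 1)
    (d : Fin (n + 1) → A) (u : Fin n → A) :
    f (n + 1) (bidiag n d u) 0 (Fin.castLE h (Fin.last j)) =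
      TaylorDelta f j (d ∘ Fin.castLE h) (u ∘ Fin.castLE (by omega)) := by
  rw [TaylorDelta, ← bidiag_submatrix_castLE]
  exact hf.apply_castLE_castLE h _ (fun a b hb ha => bidiag_apply_of_lt d u (by omega)) 0 _

end PreservesIntertwiners

/-- Taylor's theorem with remainder for matricial functions (Theorem 5.10 of the paper),
in the Banach-algebra model: if `f` preserves all block-scalar intertwiners, then
`f(z+w) = ∑_{k=0}^{n-1} Δᵏf(z)(w,…,w) + Δⁿf(z,…,z,z+w)(w,…,w)`. -/
theorem stmt8
    (f : ∀ n : ℕ, Matrix (Fin n) (Fin n) A → Matrix (Fin n) (Fin n) A)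
    (hf : ∀ (m n : ℕ) (s : Matrix (Fin m) (Fin n) ℂ)
        (X : Matrix (Fin n) (Fin n) A) (Y : Matrix (Fin m) (Fin m) A),
      blkScalar A s * X = Y * blkScalar A s →
      blkScalar A s * f n X = f m Y * blkScalar A s)
    (n : ℕ) (z w : A) :
    (f 1 !![z + w]) 0 0 =
      (∑ k ∈ Finset.range n, TaylorDelta f k (fun _ => z) (fun _ => w)) +
        TaylorDelta f n (fun i => if (i : ℕ) = n then z + w else z) (fun _ => w) := by
  set d : Fin (n + 1) → A := fun i => if (i : ℕ) = n then z + w else z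
  have hrow (a : Fin (n + 1)) : ∑ b, bidiag n d (fun _ => w) a b = z + w := by
    rw [sum_bidiag_row]
    by_cases ha : (a : ℕ) < n
    · simp [d, ha, ha.ne]
    · simp [d, (by omega : (a : ℕ) = n)]
  rw [PreservesIntertwiners.apply_one_eq_sum_row hf _ _ hrow 0, Fin.sum_univ_castSucc,
    ← Fin.sum_univ_eq_sum_range]
  congr 1
  refine Finset.sum_congr rfl fun k _ => ?_
  have hk : (k : ℕ) + 1 ≤ n + 1 := by omega
  rw [show k.castSucc = Fin.castLE hk (Fin.last k) from rfl,
    PreservesIntertwiners.apply_bidiag_castLE_last hf]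
  congr 1
  exact funext fun i => if_neg (by have := i.isLt; simp; omega)
end
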